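/- Let A and B be nonempty compact convex subsets of finite-dimensional real vector spaces and f : A × B → ℝ bilinear. Define the two-round alternating value v₂ = max_{a∈A} min_{b∈B} f(a,b) and the three-round value with consistency: v₃ = max_{a₁∈π(A)} min_{b∈B} max_{a∈A, π(a)=a₁} f(a,b), where π is a linear projection. Then v₃ = v₂. -/

import Mathlib

open Set

section Minimax

variable {E F : Type*}
  [NormedAddCommGroup E] [NormedSpace ℝ E] [FiniteDimensional ℝ E]
  [NormedAddCommGroup F] [NormedSpace ℝ F] [FiniteDimensional ℝ F]

theorem bilinear_minimax (A : Set E) (B : Set F)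
    (hAne : A.Nonempty) (hAcp : IsCompact A) (hAcv : Convex ℝ A)
    (hBne : B.Nonempty) (hBcp : IsCompact B) (hBcv : Convex ℝ B)
    (f : E → F → ℝ)
    (hf₁ : ∀ b, IsLinearMap ℝ fun a => f a b)
    (hf₂ : ∀ a, IsLinearMap ℝ fun b => f a b) :
    sInf ((fun b => sSup ((fun a => f a b) '' A)) '' B)
      = sSup ((fun a => sInf ((fun b => f a b) '' B)) '' A) := by
  classical
  have contA : ∀ b : F, Continuous fun a => f a b := fun b =>
    (IsLinearMap.mk' _ (hf₁ b)).continuous_of_finiteDimensional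
  have contB : ∀ a : E, Continuous fun b => f a b := fun a =>
    (IsLinearMap.mk' _ (hf₂ a)).continuous_of_finiteDimensional
  have hbddA : ∀ b : F, BddAbove ((fun a => f a b) '' A) := fun b =>
    (hAcp.image (contA b)).bddAbove
  have hbddB : ∀ a : E, BddBelow ((fun b => f a b) '' B) := fun a =>
    (hBcp.image (contB a)).bddBelow
  obtain ⟨a₀, ha₀⟩ := id hAne
  -- the inner-sup function over B is bounded below
  have hbddO : BddBelow ((fun b => sSup ((fun a => f a b) '' A)) '' B) := by
    refine ⟨sInf ((fun b => f a₀ b) '' B), ?_⟩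
    rintro y ⟨b, hb, rfl⟩
    exact le_trans (csInf_le (hbddB a₀) ⟨b, hb, rfl⟩) (le_csSup (hbddA b) ⟨a₀, ha₀, rfl⟩)
  have easy : sSup ((fun a => sInf ((fun b => f a b) '' B)) '' A)
      ≤ sInf ((fun b => sSup ((fun a => f a b) '' A)) '' B) := by
    refine le_csInf (hBne.image _) ?_
    rintro y ⟨b, hb, rfl⟩
    refine csSup_le (hAne.image _) ?_
    rintro x ⟨a, ha, rfl⟩
    exact le_trans (csInf_le (hbddB a) ⟨b, hb, rfl⟩) (le_csSup (hbddA b) ⟨a, ha, rfl⟩)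
  refine le_antisymm ?_ easy
  set v : ℝ := sInf ((fun b => sSup ((fun a => f a b) '' A)) '' B) with hv
  set w : ℝ := sSup ((fun a => sInf ((fun b => f a b) '' B)) '' A) with hwdef
  obtain ⟨b₀, hb₀⟩ := id hBne
  have hbddW : BddAbove ((fun a => sInf ((fun b => f a b) '' B)) '' A) := by
    refine ⟨sSup ((fun a => f a b₀) '' A), ?_⟩
    rintro y ⟨a, ha, rfl⟩
    exact le_trans (csInf_le (hbddB a) ⟨b₀, hb₀, rfl⟩) (le_csSup (hbddA b₀) ⟨a, ha, rfl⟩)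
  refine le_of_forall_pos_le_add ?_
  intro ε hε
  -- key claim: there is a* in A with f a* b ≥ v - ε for all b in B
  have key : ∃ a ∈ A, ∀ b ∈ B, v - ε ≤ f a b := by
    by_contra hcon
    push_neg at hcon
    have hclosed : ∀ b : ↥B, IsClosed {a : E | v - ε ≤ f a (b : F)} := fun b =>
      isClosed_le continuous_const (contA (b : F))
    have hemp : A ∩ ⋂ b : ↥B, {a : E | v - ε ≤ f a (b : F)} = ∅ := by
      rw [eq_empty_iff_forall_notMem]
      rintro a ⟨haA, haI⟩
      obtain ⟨b, hbB, hblt⟩ := hcon a haA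
      have := mem_iInter.1 haI ⟨b, hbB⟩
      exact absurd this (not_le.2 hblt)
    obtain ⟨u, hu⟩ := hAcp.elim_finite_subfamily_closed _ hclosed hemp
    rcases u.eq_empty_or_nonempty with rfl | hune
    · simp at hu
      exact absurd hu (Set.nonempty_iff_ne_empty.1 hAne)
    -- finite subfamily: run the separation argument
    have hufin : Fintype ↥u := FinsetCoe.fintype u
    let Φ : E →ₗ[ℝ] (↥u → ℝ) := LinearMap.pi fun i => IsLinearMap.mk' _ (hf₁ ((i : ↥B) : F))
    set K : Set (↥u → ℝ) := Φ '' A with hK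
    have hKcp : IsCompact K := hAcp.image Φ.continuous_of_finiteDimensional
    have hKcv : Convex ℝ K := hAcv.linear_image Φ
    set Q : Set (↥u → ℝ) := univ.pi fun _ => Ici (v - ε) with hQdef
    have hQcv : Convex ℝ Q := convex_pi fun _ _ => convex_Ici _
    have hQcl : IsClosed Q := isClosed_set_pi fun _ _ => isClosed_Ici
    have hdisj : Disjoint K Q := by
      rw [Set.disjoint_left]
      rintro x ⟨a, haA, rfl⟩ hxQ
      have ha' : a ∈ A ∩ ⋂ b ∈ u, {a : E | v - ε ≤ f a (b : F)} := by
        refine ⟨haA, ?_⟩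
        rw [mem_iInter₂]
        intro b hbu
        exact hxQ (⟨b, hbu⟩ : ↥u) (mem_univ _)
      rw [hu] at ha'
      exact ha'
    obtain ⟨φ, u₀, v₀, hKlt, huv, hQgt⟩ :=
      geometric_hahn_banach_compact_closed hKcv hKcp hQcv hQcl hdisj
    set lam : ↥u → ℝ := fun i => φ (Pi.single i (1:ℝ)) with hlam
    have hφ : ∀ x : ↥u → ℝ, φ x = ∑ i, x i * lam i := by
      intro x
      have hx : x = ∑ i, x i • (Pi.single i (1:ℝ) : ↥u → ℝ) := by
        funext j
        simp [Finset.sum_apply, Pi.single_apply]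
      conv_lhs => rw [hx]
      rw [map_sum]
      simp [smul_eq_mul, hlam]
    set c : ↥u → ℝ := fun _ => v - ε with hc
    have hcQ : c ∈ Q := by intro j _; simp [hc, mem_Ici]
    have hcgt : v₀ < φ c := hQgt c hcQ
    have hlamnn : ∀ i, 0 ≤ lam i := by
      intro i
      by_contra hneg
      push_neg at hneg
      have hLpos : 0 < -lam i := neg_pos.2 hneg
      set t : ℝ := (φ c - v₀ + 1) / (-lam i) with ht
      have htpos : 0 < t := div_pos (by linarith) hLpos
      have hqQ : c + t • (Pi.single i (1:ℝ) : ↥u → ℝ) ∈ Q := by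
        intro j _
        simp only [Pi.add_apply, Pi.smul_apply, smul_eq_mul, hc, Pi.single_apply]
        by_cases hji : j = i
        · simp [hji]; nlinarith
        · simp [hji]
      have hval : φ (c + t • (Pi.single i (1:ℝ) : ↥u → ℝ)) = φ c + t * lam i := by
        rw [map_add, map_smul, smul_eq_mul, hlam]
      have htl : t * lam i = -(φ c - v₀ + 1) := by
        have h1 : t * (-lam i) = φ c - v₀ + 1 := div_mul_cancel₀ _ (ne_of_gt hLpos)
        linarith [h1]
      have := hQgt _ hqQ
      rw [hval, htl] at this
      linarith
    set S : ℝ := ∑ i, lam i with hS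
    have hSpos : 0 < S := by
      rcases lt_or_ge 0 S with h | h
      · exact h
      · exfalso
        have hS0 : S = 0 := le_antisymm h (Finset.sum_nonneg fun i _ => hlamnn i)
        have hall : ∀ i ∈ Finset.univ, lam i = 0 :=
          (Finset.sum_eq_zero_iff_of_nonneg fun i _ => hlamnn i).1 hS0
        have hzero : ∀ x : ↥u → ℝ, φ x = 0 := by
          intro x
          rw [hφ]
          exact Finset.sum_eq_zero fun i hi => by rw [hall i hi, mul_zero]
        have h1 : φ (Φ a₀) < u₀ := hKlt _ ⟨a₀, ha₀, rfl⟩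
        rw [hzero] at h1
        have h2 := hcgt
        rw [hzero] at h2
        linarith
    set bs : ↥u → F := fun i => ((i : ↥B) : F) with hbs
    set bstar : F := ∑ i, (lam i / S) • bs i with hbstar
    have hbstarB : bstar ∈ B := by
      refine hBcv.sum_mem (fun i _ => div_nonneg (hlamnn i) hSpos.le) ?_ ?_
      · rw [← Finset.sum_div, ← hS, div_self hSpos.ne']
      · exact fun i _ => (i : ↥B).2
    have hfb : ∀ a ∈ A, f a bstar < v - ε := by
      intro a haA
      have hlin := IsLinearMap.mk' _ (hf₂ a)
      have h1 : f a bstar = ∑ i, (lam i / S) * f a (bs i) := by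
        show (IsLinearMap.mk' _ (hf₂ a)) bstar = _
        rw [hbstar, map_sum]
        refine Finset.sum_congr rfl fun i _ => ?_
        rw [map_smul, smul_eq_mul]
        rfl
      have h2 : φ (Φ a) = ∑ i, f a (bs i) * lam i := by
        rw [hφ]
        rfl
      have h3 : φ (Φ a) < u₀ := hKlt _ ⟨a, haA, rfl⟩
      have h4 : φ c = (v - ε) * S := by
        rw [hφ, hS, Finset.mul_sum]
      have h5 : ∑ i, f a (bs i) * lam i < (v - ε) * S := by
        rw [← h2, ← h4]; linarith
      have h6 : f a bstar = (∑ i, f a (bs i) * lam i) / S := by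
        rw [h1, Finset.sum_div]
        refine Finset.sum_congr rfl fun i _ => ?_
        ring
      rw [h6]
      rw [div_lt_iff₀ hSpos]
      linarith
    have hsup : sSup ((fun a => f a bstar) '' A) ≤ v - ε := by
      refine csSup_le (hAne.image _) ?_
      rintro y ⟨a, ha, rfl⟩
      exact (hfb a ha).le
    have : v ≤ v - ε := le_trans (csInf_le hbddO ⟨bstar, hbstarB, rfl⟩) hsup
    linarith
  obtain ⟨astar, hastarA, hastar⟩ := key
  have h1 : v - ε ≤ sInf ((fun b => f astar b) '' B) := by
    refine le_csInf (hBne.image _) ?_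
    rintro y ⟨b, hb, rfl⟩
    exact hastar b hb
  have h2 : v - ε ≤ w := h1.trans (le_csSup hbddW ⟨astar, hastarA, rfl⟩)
  linarith

end Minimax

/-- Abstract form of the QEPH collapse Σ₃ = Σ₂: the three-round alternating value
with consistency constraint `π(a) = a₁` equals the two-round value
`v₂ = max_{a∈A} min_{b∈B} f(a,b)`. -/
theorem three_round_eq_two_round {E E₁ F : Type*}
    [NormedAddCommGroup E] [NormedSpace ℝ E] [FiniteDimensional ℝ E]
    [NormedAddCommGroup E₁] [NormedSpace ℝ E₁] [FiniteDimensional ℝ E₁]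
    [NormedAddCommGroup F] [NormedSpace ℝ F] [FiniteDimensional ℝ F]
    (π : E →ₗ[ℝ] E₁)
    (A : Set E) (B : Set F)
    (hAne : A.Nonempty) (hAcp : IsCompact A) (hAcv : Convex ℝ A)
    (hBne : B.Nonempty) (hBcp : IsCompact B) (hBcv : Convex ℝ B)
    (f : E → F → ℝ)
    (hf₁ : ∀ b, IsLinearMap ℝ fun a => f a b)
    (hf₂ : ∀ a, IsLinearMap ℝ fun b => f a b)
    (v₂ v₃ : ℝ)
    (hv₂ : v₂ = sSup ((fun a => sInf ((fun b => f a b) '' B)) '' A))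
    (hv₃ : v₃ = sSup ((fun a₁ => sInf ((fun b =>
        sSup ((fun a => f a b) '' {a | a ∈ A ∧ π a = a₁})) '' B)) '' (π '' A))) :
    v₃ = v₂ := by
  have contA : ∀ b : F, Continuous fun a : E => f a b := fun b =>
    (IsLinearMap.mk' _ (hf₁ b)).continuous_of_finiteDimensional
  have contB : ∀ a : E, Continuous fun b => f a b := fun a =>
    (IsLinearMap.mk' _ (hf₂ a)).continuous_of_finiteDimensional
  have hbddA : ∀ b : F, BddAbove ((fun a => f a b) '' A) := fun b =>
    (hAcp.image (contA b)).bddAbove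
  have hbddB : ∀ a : E, BddBelow ((fun b => f a b) '' B) := fun a =>
    (hBcp.image (contB a)).bddBelow
  obtain ⟨b₀, hb₀⟩ := id hBne
  set w : E → ℝ := fun a => sInf ((fun b => f a b) '' B) with hw
  have hbddW : BddAbove (w '' A) := by
    refine ⟨sSup ((fun a => f a b₀) '' A), ?_⟩
    rintro y ⟨a, ha, rfl⟩
    exact le_trans (csInf_le (hbddB a) ⟨b₀, hb₀, rfl⟩) (le_csSup (hbddA b₀) ⟨a, ha, rfl⟩)
  -- slice facts
  set S : E₁ → Set E := fun a₁ => {a | a ∈ A ∧ π a = a₁} with hSdef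
  have hSsub : ∀ a₁, S a₁ ⊆ A := fun a₁ a ha => ha.1
  have hslice : ∀ a₁ ∈ π '' A,
      sInf ((fun b => sSup ((fun a => f a b) '' S a₁)) '' B) = sSup (w '' S a₁) := by
    rintro a₁ ⟨a₀, ha₀, rfl⟩
    have hSeq : S (π a₀) = A ∩ π ⁻¹' {π a₀} := by
      ext a; simp [hSdef]
    have hSne : (S (π a₀)).Nonempty := ⟨a₀, ha₀, rfl⟩
    have hScp : IsCompact (S (π a₀)) := by
      rw [hSeq]
      exact hAcp.inter_right (isClosed_singleton.preimage π.continuous_of_finiteDimensional)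
    have hScv : Convex ℝ (S (π a₀)) := by
      rw [hSeq]
      exact hAcv.inter ((convex_singleton (π a₀)).linear_preimage π)
    exact bilinear_minimax (S (π a₀)) B hSne hScp hScv hBne hBcp hBcv f hf₁ hf₂
  have hM : ∀ a₁ ∈ π '' A, sSup (w '' S a₁) ≤ sSup (w '' A) := by
    rintro a₁ ⟨a₀, ha₀, rfl⟩
    exact csSup_le_csSup hbddW (⟨w a₀, a₀, ⟨ha₀, rfl⟩, rfl⟩) (image_mono (f := w) (hSsub _))
  rw [hv₂, hv₃]
  rw [show ((fun a₁ => sInf ((fun b =>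
        sSup ((fun a => f a b) '' {a | a ∈ A ∧ π a = a₁})) '' B)) '' (π '' A))
      = (fun a₁ => sSup (w '' S a₁)) '' (π '' A) from image_congr hslice]
  refine le_antisymm ?_ ?_
  · refine csSup_le ((hAne.image π).image _) ?_
    rintro y ⟨a₁, ha₁, rfl⟩
    exact hM a₁ ha₁
  · refine csSup_le (hAne.image w) ?_
    rintro y ⟨a, ha, rfl⟩
    have h1 : w a ≤ sSup (w '' S (π a)) := by
      refine le_csSup (hbddW.mono (image_mono (f := w) (hSsub _))) ⟨a, ⟨ha, rfl⟩, rfl⟩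
    refine h1.trans (le_csSup ?_ ⟨π a, ⟨a, ha, rfl⟩, rfl⟩)
    exact ⟨sSup (w '' A), by rintro y ⟨a₁, ha₁, rfl⟩; exact hM a₁ ha₁⟩
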